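/- Let D be a positive integer and let m_1, m_2, m_3 be positive integers with m_1+m_2+m_3 = 2D and max(m_1,m_2,m_3) ≤ D. Then in the symmetric group S_{D+1} on {1,…,D+1}, the cycles σ_1 = (1,2,…,m_1+1) and σ_2 = (1, m_1+1, m_1, …, m_1+m_3−D+2, m_1+2, m_1+3, …, D+1) are cycles of lengths m_1+1 and m_2+1 respectively, their product σ_1σ_2 (applying σ_2 first) is a cycle of length m_3+1, and the subgroup generated by σ_1, σ_2 and (σ_1σ_2)^{-1} acts transitively on {1,…,D+1}. -/

import Mathlib

/-!
Write `x = 1`, `A = (2, …, c + 1)`, `B = (c + 2, …, m₁ + 1)` and `C = (m₁ + 2, …, D + 1)`, where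
`c = m₁ + m₃ - D`. These blocks partition `{1, …, D + 1}`, `σ₁ = (x, A, B)` and
`σ₂ = (x, rev B, C)`. Splitting a cycle at its first point, `(x, l₁, l₂) = (x, l₂)(x, l₁)`, and
`(x, rev B) = (x, B)⁻¹` give `σ₁ = (x, B)(x, A)` and `σ₂ = (x, C)(x, B)⁻¹`, so
`σ₁σ₂ = (x, B)(x, C, A)(x, B)⁻¹` is conjugate to a cycle of length `1 + |C| + |A| = m₃ + 1`.
Every point lies on `σ₁` or `σ₂`, and both pass through `x`; hence transitivity.
-/

open Fin.NatCast

namespace List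

variable {α : Type*} [DecidableEq α]

theorem formPerm_cons_concat {x b : α} {l : List α} (hb : b ∉ x :: l) :
    formPerm (x :: (l ++ [b])) = Equiv.swap x b * formPerm (x :: l) := by
  induction l using List.reverseRecOn with
  | nil => simp
  | append_singleton l a _ =>
    rw [show x :: (l ++ [a] ++ [b]) = x :: l ++ [a, b] by simp, formPerm_append_pair,
      ← mul_inv_eq_iff_eq_mul, cons_append, ← Equiv.swap_apply_apply,
      formPerm_cons_concat_apply_last, formPerm_apply_of_notMem hb]

theorem formPerm_cons_append {x : α} {l₁ l₂ : List α} (h : (x :: (l₁ ++ l₂)).Nodup) :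
    formPerm (x :: (l₁ ++ l₂)) = formPerm (x :: l₂) * formPerm (x :: l₁) := by
  induction l₂ using List.reverseRecOn with
  | nil => simp
  | append_singleton l b ih =>
    rw [← append_assoc, ← cons_append, ← concat_eq_append, nodup_concat] at h
    rw [← append_assoc, formPerm_cons_concat h.1, ih h.2,
      formPerm_cons_concat fun hb => h.1 (by grind), mul_assoc]

theorem formPerm_cons_reverse {x : α} {l : List α} (h : (x :: l).Nodup) :
    formPerm (x :: l.reverse) = (formPerm (x :: l))⁻¹ := by
  rw [← formPerm_reverse, reverse_cons, ← formPerm_rotate_one _ (by simpa using h)]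
  simp

theorem formPerm_cons_append_mul_formPerm_cons_reverse_append {x : α} {A B C : List α}
    (h : (x :: (A ++ B ++ C)).Nodup) :
    formPerm (x :: (A ++ B)) * formPerm (x :: (B.reverse ++ C)) =
      formPerm (x :: B) * formPerm (x :: (C ++ A)) * (formPerm (x :: B))⁻¹ := by
  simp only [nodup_cons, nodup_append, mem_append, not_or] at h
  rw [formPerm_cons_append (by grind), formPerm_cons_append (by grind),
    formPerm_cons_reverse (by grind), formPerm_cons_append (l₁ := C) (by grind)]
  group

theorem card_support_formPerm [Fintype α] {l : List α} (hl : l.Nodup) (hn : 2 ≤ l.length) :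
    (formPerm l).support.card = l.length := by
  rw [support_formPerm_of_nodup _ hl fun x hx => by simp [hx] at hn,
    toFinset_card_of_nodup hl]

theorem exists_mem_closure_formPerm_apply_eq {l₁ l₂ : List α} (hl₁ : l₁.Nodup) (hl₂ : l₂.Nodup)
    (hn₁ : 2 ≤ l₁.length) (hn₂ : 2 ≤ l₂.length) {p : α} (hp₁ : p ∈ l₁) (hp₂ : p ∈ l₂)
    (hcover : ∀ y, y ∈ l₁ ∨ y ∈ l₂) {S : Set (Equiv.Perm α)} (hS₁ : formPerm l₁ ∈ S)
    (hS₂ : formPerm l₂ ∈ S) (x y : α) : ∃ g ∈ Subgroup.closure S, g x = y := by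
  have reach {l : List α} (hl : l.Nodup) (hn : 2 ≤ l.length) (hp : p ∈ l)
      (hS : formPerm l ∈ S) {y : α} (hy : y ∈ l) : ∃ g ∈ Subgroup.closure S, g p = y := by
    have moves {z} (hz : z ∈ l) := (formPerm_apply_mem_ne_self_iff l hl z hz).mpr hn
    obtain ⟨k, hk⟩ := (isCycle_formPerm hl hn).exists_zpow_eq (moves hp) (moves hy)
    exact ⟨_, zpow_mem (Subgroup.subset_closure hS) k, hk⟩
  have hreach (y : α) : ∃ g ∈ Subgroup.closure S, g p = y :=
    (hcover y).elim (reach hl₁ hn₁ hp₁ hS₁) (reach hl₂ hn₂ hp₂ hS₂)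
  obtain ⟨g, hg, rfl⟩ := hreach x
  obtain ⟨h, hh, rfl⟩ := hreach y
  exact ⟨h * g⁻¹, mul_mem hh (inv_mem hg), by simp⟩

theorem three_cycles_of_blocks [Fintype α] {x : α} {A B C : List α}
    (hnd : (x :: (A ++ B ++ C)).Nodup) (hcover : ∀ y, y ∈ x :: (A ++ B ++ C))
    (hAB : 0 < A.length + B.length) (hBC : 0 < B.length + C.length)
    (hCA : 0 < C.length + A.length) {σ₁ σ₂ : Equiv.Perm α}
    (hσ₁ : σ₁ = formPerm (x :: (A ++ B))) (hσ₂ : σ₂ = formPerm (x :: (B.reverse ++ C))) :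
    σ₁.IsCycle ∧ σ₁.support.card = A.length + B.length + 1 ∧
    σ₂.IsCycle ∧ σ₂.support.card = B.length + C.length + 1 ∧
    (σ₁ * σ₂).IsCycle ∧ (σ₁ * σ₂).support.card = C.length + A.length + 1 ∧
    (∀ y z : α, ∃ g ∈ Subgroup.closure {σ₁, σ₂, (σ₁ * σ₂)⁻¹}, g y = z) := by
  have hprod : σ₁ * σ₂ = formPerm (x :: B) * formPerm (x :: (C ++ A)) * (formPerm (x :: B))⁻¹ :=
    hσ₁ ▸ hσ₂ ▸ formPerm_cons_append_mul_formPerm_cons_reverse_append hnd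
  obtain ⟨hnd₁, hnd₂, hnd₃⟩ : (x :: (A ++ B)).Nodup ∧ (x :: (B.reverse ++ C)).Nodup ∧
      (x :: (C ++ A)).Nodup := by
    simp only [nodup_cons, nodup_append, nodup_reverse, mem_append, mem_reverse, not_or] at hnd ⊢
    grind
  have hcover' (y : α) : y ∈ x :: (A ++ B) ∨ y ∈ x :: (B.reverse ++ C) := by
    have hy := hcover y
    simp only [mem_cons, mem_append, mem_reverse] at hy ⊢
    tauto
  subst hσ₁ hσ₂
  refine ⟨isCycle_formPerm hnd₁ (by simpa), ?_, isCycle_formPerm hnd₂ (by simpa), ?_,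
    hprod ▸ (isCycle_formPerm hnd₃ (by simpa)).conj, ?_,
    exists_mem_closure_formPerm_apply_eq hnd₁ hnd₂ (by simpa) (by simpa) (mem_cons_self ..)
      (mem_cons_self ..) hcover' (by simp) (by simp)⟩
  · simp [card_support_formPerm hnd₁ (by simpa)]
  · simp [card_support_formPerm hnd₂ (by simpa)]
  · rw [hprod, Equiv.Perm.card_support_conj, card_support_formPerm hnd₃ (by simpa)]
    simp

theorem range'_append_of_add_eq {s a b n : ℕ} (h : a + b = n) :
    range' s a ++ range' (a + s) b = range' s n := by
  rw [add_comm a s, range'_append_1, h]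

theorem map_pred_cast_range'_one (n : ℕ) :
    (range' 1 (n + 1)).map (fun j : ℕ => ((j - 1 : ℕ) : Fin (n + 1))) = finRange (n + 1) :=
  ext_getElem (by simp) fun i hi _ => by
    simp only [length_map, length_range'] at hi
    simp [Fin.ext_iff, Nat.mod_eq_of_lt hi]

end List

open List in
/-- Points `1, …, D + 1` are encoded as `Fin (D + 1)` via `j ↦ j - 1`, and the cycle
`(x₁, …, x_k)` is `List.formPerm [x₁, …, x_k]`. -/
theorem explicit_three_cycles_general (D m₁ m₂ m₃ : ℕ)
    (hm₁ : 0 < m₁) (hm₂ : 0 < m₂) (hm₃ : 0 < m₃)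
    (hsum : m₁ + m₂ + m₃ = 2 * D)
    (h₁ : m₁ ≤ D) (h₂ : m₂ ≤ D) (h₃ : m₃ ≤ D)
    (σ₁ σ₂ : Equiv.Perm (Fin (D + 1)))
    -- `σ₁ = (1, 2, …, m₁+1)`
    (hσ₁ : σ₁ = ((List.range' 1 (m₁ + 1)).map
      (fun j : ℕ => ((j - 1 : ℕ) : Fin (D + 1)))).formPerm)
    -- `σ₂ = (1, m₁+1, m₁, …, m₁+m₃-D+2, m₁+2, m₁+3, …, D+1)`
    (hσ₂ : σ₂ = ((1 :: ((List.range' (m₁ + m₃ - D + 2) (m₁ + m₂ - D)).reverse ++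
        List.range' (m₁ + 2) (D - m₁))).map
      (fun j : ℕ => ((j - 1 : ℕ) : Fin (D + 1)))).formPerm) :
    σ₁.IsCycle ∧ σ₁.support.card = m₁ + 1 ∧
    σ₂.IsCycle ∧ σ₂.support.card = m₂ + 1 ∧
    (σ₁ * σ₂).IsCycle ∧ (σ₁ * σ₂).support.card = m₃ + 1 ∧
    (∀ x y : Fin (D + 1),
      ∃ g ∈ Subgroup.closure {σ₁, σ₂, (σ₁ * σ₂)⁻¹}, g x = y) := by
  set e := fun j : ℕ => ((j - 1 : ℕ) : Fin (D + 1))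
  set A := (range' 2 (m₁ + m₃ - D)).map e
  set B := (range' (m₁ + m₃ - D + 2) (m₁ + m₂ - D)).map e
  set C := (range' (m₁ + 2) (D - m₁)).map e
  have hAB := range'_append_of_add_eq (s := 2) (show m₁ + m₃ - D + (m₁ + m₂ - D) = m₁ by omega)
  have hABC := range'_append_of_add_eq (s := 2) (show m₁ + (D - m₁) = D by omega)
  have hall : e 1 :: (A ++ B ++ C) = finRange (D + 1) := by
    rw [← map_pred_cast_range'_one, range'_succ, ← hABC, ← hAB]; simp [A, B, C, e]
  have hσ₁' : σ₁ = formPerm (e 1 :: (A ++ B)) := by rw [hσ₁, range'_succ, ← hAB]; simp [A, B]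
  have hσ₂' : σ₂ = formPerm (e 1 :: (B.reverse ++ C)) := by rw [hσ₂]; simp [B, C]
  have hcycles := three_cycles_of_blocks (hall ▸ nodup_finRange (D + 1))
    (fun y => hall ▸ mem_finRange y) (by simp [A, B]; omega) (by simp [B, C]; omega)
    (by simp [A, C]; omega) hσ₁' hσ₂'
  simp only [A, B, C, length_map, length_range'] at hcycles
  obtain ⟨hc₁, hk₁, hc₂, hk₂, hc₃, hk₃, htrans⟩ := hcycles
  exact ⟨hc₁, by omega, hc₂, by omega, hc₃, by omega, htrans⟩

/-- The explicit construction in Case 2 (`l = 3`) of the proof of Proposition 2.11.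
Points of `{1, …, D+1}` are encoded as `Fin (D+1)`, the point `j` corresponding to
`((j - 1 : ℕ) : Fin (D+1))`; a cycle `(x₁, …, x_k)` is `List.formPerm` of the list
`[x₁, …, x_k]`. -/
theorem explicit_three_cycles (D m₁ m₂ m₃ : ℕ) (hD : 0 < D)
    (hm₁ : 0 < m₁) (hm₂ : 0 < m₂) (hm₃ : 0 < m₃)
    (hsum : m₁ + m₂ + m₃ = 2 * D)
    (h₁ : m₁ ≤ D) (h₂ : m₂ ≤ D) (h₃ : m₃ ≤ D)
    (σ₁ σ₂ : Equiv.Perm (Fin (D + 1)))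
    -- `σ₁ = (1, 2, …, m₁+1)`
    (hσ₁ : σ₁ = ((List.range' 1 (m₁ + 1)).map
      (fun j : ℕ => ((j - 1 : ℕ) : Fin (D + 1)))).formPerm)
    -- `σ₂ = (1, m₁+1, m₁, …, m₁+m₃-D+2, m₁+2, m₁+3, …, D+1)`
    (hσ₂ : σ₂ = ((1 :: ((List.range' (m₁ + m₃ - D + 2) (m₁ + m₂ - D)).reverse ++
        List.range' (m₁ + 2) (D - m₁))).map
      (fun j : ℕ => ((j - 1 : ℕ) : Fin (D + 1)))).formPerm) :
    σ₁.IsCycle ∧ σ₁.support.card = m₁ + 1 ∧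
    σ₂.IsCycle ∧ σ₂.support.card = m₂ + 1 ∧
    (σ₁ * σ₂).IsCycle ∧ (σ₁ * σ₂).support.card = m₃ + 1 ∧
    (∀ x y : Fin (D + 1),
      ∃ g ∈ Subgroup.closure {σ₁, σ₂, (σ₁ * σ₂)⁻¹}, g x = y) :=
  explicit_three_cycles_general D m₁ m₂ m₃ hm₁ hm₂ hm₃ hsum h₁ h₂ h₃ σ₁ σ₂ hσ₁ hσ₂
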